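/- (Erdős–Stone–Simonovits) If H is a graph with chromatic number χ(H) = r+1 ≥ 2, then ex(n,H) = |E(T_{n,r})| + o(n²); that is, for every ε > 0 there exists n_0 such that for all n ≥ n_0, |ex(n,H) − |E(T_{n,r})|| ≤ εn². -/

import Mathlib

open SimpleGraph

/-- The degree of a vertex, defined without decidability assumptions. -/
noncomputable def gdeg {V : Type*} [Fintype V] (G : SimpleGraph V) (v : V) : ℕ :=
  {w | G.Adj v w}.ncard

/-- The multiset of vertex degrees of a finite simple graph. -/
noncomputable def degMultiset {V : Type*} [Fintype V] (G : SimpleGraph V) : Multiset ℕ :=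
  Finset.univ.val.map (gdeg G)

/-- A finite sequence of naturals is *graphic* if it is the degree sequence of
a finite simple graph (a *realization*). -/
def IsGraphic (π : List ℕ) : Prop :=
  ∃ G : SimpleGraph (Fin π.length), degMultiset G = (π : Multiset ℕ)

/-- `H` is contained in `G` as a (not necessarily induced) subgraph. -/
def ContainsSub {V : Type*} {W : Type*} (H : SimpleGraph V) (G : SimpleGraph W) : Prop :=
  ∃ f : V → W, Function.Injective f ∧ ∀ ⦃a b⦄, H.Adj a b → G.Adj (f a) (f b)

/-- `π` is *potentially `H`-graphic*: some realization of `π` contains `H` as a subgraph. -/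
def PotentiallyGraphic {V : Type*} (H : SimpleGraph V) (π : List ℕ) : Prop :=
  ∃ G : SimpleGraph (Fin π.length), degMultiset G = (π : Multiset ℕ) ∧ ContainsSub H G

/-- The potential number `σ(H,n)`: the minimum even integer such that every
(nonincreasing) graphic sequence of length `n` with sum at least that integer is
potentially `H`-graphic. -/
noncomputable def potentialNumber {V : Type*} (H : SimpleGraph V) (n : ℕ) : ℕ :=
  sInf {s : ℕ | Even s ∧ ∀ π : List ℕ, π.length = n → π.Pairwise (· ≥ ·) →
      IsGraphic π → s ≤ π.sum → PotentiallyGraphic H π}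

/-- The maximum degree `Δ(G)` of a finite graph. -/
noncomputable def maxDeg {V : Type*} [Fintype V] (G : SimpleGraph V) : ℕ :=
  Finset.univ.sup (gdeg G)

/-- The independence number `α(G)`. -/
noncomputable def indepNum {V : Type*} [Fintype V] (G : SimpleGraph V) : ℕ :=
  sSup {k | ∃ s : Finset V, s.card = k ∧ (s : Set V).Pairwise fun a b => ¬ G.Adj a b}

/-- `∇_i(H)`: the minimum of `Δ(F)` over induced subgraphs `F` of `H` of order `i`. -/
noncomputable def nabla {V : Type*} [Fintype V] (H : SimpleGraph V) (i : ℕ) : ℕ :=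
  sInf {d | ∃ s : Finset V, s.card = i ∧ maxDeg (SimpleGraph.induce (s : Set V) H) = d}

/-- The sequence `π̃_i(H,n) = ((n-1)^{k-i}, (k-i+∇_i(H)-1)^{n-k+i})`, with the last
term reduced by one if the sum would otherwise be odd. -/
noncomputable def tildePi {V : Type*} [Fintype V] (H : SimpleGraph V) (i n : ℕ) : List ℕ :=
  let k := Fintype.card V
  let d := k - i + nabla H i - 1
  let base := List.replicate (k - i) (n - 1) ++ List.replicate (n - k + i) d
  if Even base.sum then base else base.dropLast ++ [d - 1]

/-- `σ̃_i(H) = 2(k-i) + ∇_i(H) - 1`. -/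
noncomputable def sigmaTildeI {V : Type*} [Fintype V] (H : SimpleGraph V) (i : ℕ) : ℕ :=
  2 * (Fintype.card V - i) + nabla H i - 1

/-- `σ̃(H) = max_{α(H)+1 ≤ i ≤ k} σ̃_i(H)`. -/
noncomputable def sigmaTilde {V : Type*} [Fintype V] (H : SimpleGraph V) : ℕ :=
  (Finset.Icc (_root_.indepNum H + 1) (Fintype.card V)).sup (sigmaTildeI H)

/-- The family `P(H,n)` of extremal nonrealizing sequences. -/
noncomputable def potSet {V : Type*} [Fintype V] (H : SimpleGraph V) (n : ℕ) : Set (List ℕ) :=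
  {π | ∃ i ∈ Finset.Icc (_root_.indepNum H + 1) (Fintype.card V),
      sigmaTildeI H i = sigmaTilde H ∧ π = tildePi H i n}

/-- `i*(H)`: the least index `i ∈ {α(H)+1, …, k}` with `σ̃_i(H) = σ̃(H)`. -/
noncomputable def iStar {V : Type*} [Fintype V] (H : SimpleGraph V) : ℕ :=
  sInf {i | i ∈ Finset.Icc (_root_.indepNum H + 1) (Fintype.card V) ∧ sigmaTildeI H i = sigmaTilde H}

/-- `‖π₁ - π₂‖ = Σ_j |x_j - y_j|`, padding the shorter sequence with zeros. -/
def seqDist (π₁ π₂ : List ℕ) : ℕ :=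
  ((List.range (max π₁.length π₂.length)).map fun j =>
    Nat.dist (π₁.getD j 0) (π₂.getD j 0)).sum

/-- `H` is stable with respect to the potential number (σ-stable). -/
def SigmaStable {V : Type*} [Fintype V] (H : SimpleGraph V) : Prop :=
  ∀ ε : ℝ, 0 < ε → ∃ δ : ℝ, 0 < δ ∧ ∃ n₀ : ℕ, ∀ n : ℕ, n₀ ≤ n →
    ∀ π : List ℕ, π.length = n → π.Pairwise (· ≥ ·) → IsGraphic π →
      ¬ PotentiallyGraphic H π →
      (potentialNumber H n : ℝ) - δ * n ≤ (π.sum : ℝ) →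
      ∃ π' ∈ potSet H n, (seqDist π π' : ℝ) < ε * n

/-- The nonincreasing degree sequence of a finite graph. -/
noncomputable def degList {V : Type*} [Fintype V] (G : SimpleGraph V) : List ℕ :=
  ((degMultiset G).sort (· ≤ ·)).reverse

/-- `π` is degree-sufficient for `H`: termwise, `π` dominates the nonincreasing
degree sequence of `H`. -/
def DegreeSufficient {V : Type*} [Fintype V] (H : SimpleGraph V) (π : List ℕ) : Prop :=
  Fintype.card V ≤ π.length ∧ ∀ i < Fintype.card V, (degList H).getD i 0 ≤ π.getD i 0

/-- `H` is weakly σ-stable. -/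
def WeaklySigmaStable {V : Type*} [Fintype V] (H : SimpleGraph V) : Prop :=
  ∀ ε : ℝ, 0 < ε → ∃ δ : ℝ, 0 < δ ∧ ∃ n₀ : ℕ, ∀ n : ℕ, n₀ ≤ n →
    ∀ π : List ℕ, π.length = n → π.Pairwise (· ≥ ·) → IsGraphic π →
      DegreeSufficient H π →
      ¬ PotentiallyGraphic H π →
      (potentialNumber H n : ℝ) - δ * n ≤ (π.sum : ℝ) →
      ∃ π' ∈ potSet H n, (seqDist π π' : ℝ) < ε * n

/-- The join `G ∨ H` of two graphs on disjoint vertex sets. -/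
def graphJoin {V : Type*} {W : Type*} (G : SimpleGraph V) (H : SimpleGraph W) :
    SimpleGraph (V ⊕ W) where
  Adj x y :=
    match x, y with
    | .inl a, .inl b => G.Adj a b
    | .inr a, .inr b => H.Adj a b
    | .inl _, .inr _ => True
    | .inr _, .inl _ => True
  symm := by
    constructor
    rintro (a | a) (b | b) h
    · exact G.adj_symm h
    · trivial
    · trivial
    · exact H.adj_symm h
  loopless := by
    constructor
    rintro (a | a) h
    · exact G.loopless.irrefl a h
    · exact H.loopless.irrefl a h

/-- The double star `S_{x,y}`: two adjacent centers (vertices `0` and `1`), with the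
first center adjacent to `x` leaves and the second to `y` leaves, so that the centers
have degrees `x+1` and `y+1`. -/
def doubleStar (x y : ℕ) : SimpleGraph (Fin (x + y + 2)) :=
  SimpleGraph.fromRel fun a b =>
    (a.val = 0 ∧ b.val = 1) ∨
    (a.val = 0 ∧ 2 ≤ b.val ∧ b.val < x + 2) ∨
    (a.val = 1 ∧ x + 2 ≤ b.val)

/-- Laying off the term at (0-based) position `i`: delete it and subtract one from
the `d_i` largest remaining terms. -/
def layOffAt (π : List ℕ) (i : ℕ) : List ℕ :=
  let d := π.getD i 0
  let rest := π.take i ++ π.drop (i + 1)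
  (rest.take d).map (· - 1) ++ rest.drop d

/-- The extremal number `ex(n,H)`: the maximum number of edges of an `H`-free simple graph
on `n` vertices. -/
noncomputable def exNum (n : ℕ) {W : Type*} (H : SimpleGraph W) : ℕ :=
  sSup {m | ∃ G : SimpleGraph (Fin n), ¬ ContainsSub H G ∧ G.edgeSet.ncard = m}

/-!
`T_{n,r}` is `r`-colourable, so it is `H`-free and `ex(n, H) ≥ |E(T_{n,r})| ≥ (1 - 1/r) n²/2 - r²`.
Conversely `H` embeds in the complete `(r+1)`-partite graph with parts of size `|V(H)|`, which by
the minimum-degree form of the Erdős–Stone theorem lies in every large graph of minimum degree at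
least `(1 - 1/r + ε) n`. Deleting a vertex of an extremal `H`-free graph on `n + 1` vertices leaves
an `H`-free graph on `n` vertices, so its minimum degree is at least `ex(n+1, H) - ex(n, H)`. These
increments are therefore eventually below `(1 - 1/r + ε) n`, and summing them gives
`ex(n, H) ≤ (1 - 1/r + ε) n²/2 + O(n)`.
-/

open Filter Finset

theorem eventually_add_mul_le_mul_sq (a b : ℝ) {δ : ℝ} (hδ : 0 < δ) :
    ∀ᶠ n : ℕ in atTop, a + b * n ≤ δ * n ^ 2 := by
  filter_upwards [eventually_ge_atTop 1, eventually_ge_atTop ⌈(|a| + |b|) / δ⌉₊] with n h1 hn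
  have h1 : (1 : ℝ) ≤ n := by exact_mod_cast h1
  have hn : (|a| + |b|) / δ ≤ n := Nat.ceil_le.1 hn
  rw [div_le_iff₀ hδ] at hn
  nlinarith [le_abs_self a, le_abs_self b, abs_nonneg a, abs_nonneg b]

namespace SimpleGraph

variable {V W : Type*}

theorem containsSub_iff_isContained {G : SimpleGraph V} {H : SimpleGraph W} :
    ContainsSub H G ↔ H ⊑ G :=
  ⟨fun ⟨f, hf, hadj⟩ => ⟨⟨⟨f, fun h => hadj h⟩, hf⟩⟩,
    fun ⟨e⟩ => ⟨e, e.injective, fun _ _ h => e.toHom.map_adj h⟩⟩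

theorem ncard_edgeSet [Fintype V] (G : SimpleGraph V) [DecidableRel G.Adj] :
    G.edgeSet.ncard = #G.edgeFinset :=
  Set.ncard_eq_toFinset_card' _

theorem exNum_eq_extremalNumber (n : ℕ) (H : SimpleGraph W) :
    exNum n H = extremalNumber n H := by
  classical
  have hS : extremalNumber n H ∈
      upperBounds {m | ∃ G : SimpleGraph (Fin n), ¬ ContainsSub H G ∧ G.edgeSet.ncard = m} := by
    rintro _ ⟨G, hG, rfl⟩
    simpa [ncard_edgeSet] using
      card_edgeFinset_le_extremalNumber (containsSub_iff_isContained.not.1 hG)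
  refine le_antisymm (csSup_le' hS) (not_lt.1 fun hlt => ?_)
  obtain ⟨G, _, hG, hlt⟩ := (lt_extremalNumber_iff (V := Fin n) H _).1 (by simpa using hlt)
  exact hlt.not_ge (le_csSup ⟨_, hS⟩ ⟨G, containsSub_iff_isContained.not.2 hG, ncard_edgeSet G⟩)

theorem turanGraph_colorable (n : ℕ) {r : ℕ} (hr : 0 < r) : (turanGraph n r).Colorable r :=
  ⟨⟨fun v => ⟨v % r, Nat.mod_lt _ hr⟩, fun h heq => h (Fin.val_eq_of_eq heq)⟩⟩

theorem free_turanGraph_of_not_colorable {H : SimpleGraph W} {r : ℕ} (hr : 0 < r)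
    (hH : ¬H.Colorable r) (n : ℕ) : H.Free (turanGraph n r) :=
  fun ⟨e⟩ => hH ((turanGraph_colorable n hr).of_hom e.toHom)

theorem sub_sq_le_card_edgeFinset_turanGraph (n : ℕ) {r : ℕ} (hr : 0 < r) :
    (1 - 1 / r) * n ^ 2 / 2 - r ^ 2 ≤ (#(turanGraph n r).edgeFinset : ℝ) := by
  have hmr : ((n % r : ℕ) : ℝ) ≤ r := by exact_mod_cast (Nat.mod_lt n hr).le
  have hmn : (n % r) ^ 2 ≤ n ^ 2 := Nat.pow_le_pow_left (Nat.mod_le n r) 2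
  have hfloor := Nat.sub_one_lt_floor
    ((((n ^ 2 - (n % r) ^ 2) * (r - 1) : ℕ) : ℝ) / (2 * r : ℕ))
  rw [Nat.floor_div_eq_div] at hfloor
  rw [card_edgeFinset_turanGraph]
  push_cast [Nat.cast_sub hmn, Nat.cast_sub hr] at hfloor ⊢
  have hr' : (1 : ℝ) ≤ r := by exact_mod_cast hr
  have key : (1 - 1 / (r : ℝ)) * n ^ 2 / 2 - r ^ 2 + 1 ≤
      (n ^ 2 - ((n % r : ℕ) : ℝ) ^ 2) * (r - 1) / (2 * r) := by
    rw [le_div_iff₀ (by positivity)]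
    field_simp
    have hsq : ((n % r : ℕ) : ℝ) ^ 2 ≤ r ^ 2 := pow_le_pow_left₀ (Nat.cast_nonneg _) hmr 2
    nlinarith [mul_le_mul_of_nonneg_left hsq (sub_nonneg.2 hr')]
  linarith [(Nat.choose 2 (n % r)).cast_nonneg (α := ℝ)]

theorem exists_free_extremalNumber_succ_le_add_minDegree {H : SimpleGraph W} (hH : H ≠ ⊥)
    (n : ℕ) : ∃ (G : SimpleGraph (Fin (n + 1))) (_ : DecidableRel G.Adj),
      H.Free G ∧ extremalNumber (n + 1) H ≤ extremalNumber n H + G.minDegree := by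
  obtain ⟨G, _, hG⟩ := exists_isExtremal_free (V := Fin (n + 1)) hH
  obtain ⟨v, hv⟩ := G.exists_minimal_degree_vertex
  have hdel := card_edgeFinset_deleteIncidenceSet_le_extremalNumber hG.prop v
  rw [card_edgeFinset_deleteIncidenceSet, card_edgeFinset_of_isExtremal_free hG] at hdel
  simp only [Fintype.card_fin, add_tsub_cancel_right] at hdel
  exact ⟨G, _, hG.prop, by omega⟩

theorem extremalNumber_le_of_forall_minDegree {H : SimpleGraph W} (hH : H ≠ ⊥) {c : ℝ} {N : ℕ}
    (h : ∀ n ≥ N, ∀ (G : SimpleGraph (Fin n)) [DecidableRel G.Adj], c * n ≤ G.minDegree → H ⊑ G)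
    {n : ℕ} (hn : N ≤ n) :
    (extremalNumber n H : ℝ) ≤ extremalNumber N H + c * (n * (n + 1) - N * (N + 1)) / 2 := by
  induction n, hn using Nat.le_induction with
  | base => simp
  | succ n hn ih =>
    obtain ⟨G, _, hfree, hle⟩ := exists_free_extremalNumber_succ_le_add_minDegree hH n
    have hδ : (G.minDegree : ℝ) < c * (n + 1 : ℕ) :=
      not_le.1 fun hδ => hfree (h (n + 1) (by omega) G hδ)
    have hle' : (extremalNumber (n + 1) H : ℝ) ≤ extremalNumber n H + G.minDegree := by
      exact_mod_cast hle
    push_cast at hδ ⊢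
    linarith

theorem eventually_extremalNumber_le_of_colorable [Fintype W] {H : SimpleGraph W} (hH : H ≠ ⊥)
    {r : ℕ} (hc : H.Colorable (r + 1)) {ε : ℝ} (hε : 0 < ε) :
    ∀ᶠ n : ℕ in atTop, (extremalNumber n H : ℝ) ≤ (1 - 1 / r + ε) * n ^ 2 / 2 := by
  have hK : H ⊑ completeEquipartiteGraph (r + 1) (Fintype.card W) :=
    isContained_completeEquipartiteGraph_of_colorable hc.some _
      fun _ => Fintype.card_subtype_le _
  obtain ⟨N, hN⟩ := eventually_atTop.1 <|
    eventually_completeEquipartiteGraph_isContained_of_minDegree (half_pos hε) r (Fintype.card W)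
  set c : ℝ := 1 - 1 / r + ε / 2 with hc
  have hc0 : 0 ≤ c := by
    have := Nat.cast_inv_le_one (α := ℝ) r
    rw [hc, one_div]
    linarith
  filter_upwards [eventually_ge_atTop N,
    eventually_add_mul_le_mul_sq (extremalNumber N H) (c / 2) (half_pos (half_pos hε))]
    with n hn hsmall
  have hex := extremalNumber_le_of_forall_minDegree hH
    (fun n hn G _ hδ => hK.trans (hN n hn hδ)) hn
  have hN0 : 0 ≤ c * (N * (N + 1)) := mul_nonneg hc0 (by positivity)
  rw [hc] at hex hsmall hN0
  nlinarith

end SimpleGraph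

/-- **Erdős–Stone–Simonovits.** If `χ(H) = r + 1 ≥ 2`, then
`ex(n,H) = |E(T_{n,r})| + o(n²)`. -/
theorem erdosStoneSimonovits {W : Type} [Fintype W] (H : SimpleGraph W) (r : ℕ)
    (hr : 1 ≤ r) (hχ : H.chromaticNumber = (↑(r + 1) : ℕ∞)) :
    ∀ ε : ℝ, 0 < ε → ∃ n₀ : ℕ, ∀ n : ℕ, n₀ ≤ n →
      |(exNum n H : ℝ) - ((SimpleGraph.turanGraph n r).edgeSet.ncard : ℝ)| ≤ ε * n ^ 2 := by
  intro ε hε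
  have hcol : H.Colorable (r + 1) := chromaticNumber_le_iff_colorable.1 hχ.le
  have hncol : ¬H.Colorable r := fun h => by
    have := hχ ▸ h.chromaticNumber_le
    norm_cast at this
    omega
  have hbot : H ≠ ⊥ := fun h => hncol ((colorable_one_iff.2 h).mono hr)
  obtain ⟨n₀, hn₀⟩ := eventually_atTop.1 <|
    (eventually_extremalNumber_le_of_colorable hbot hcol hε).and
      (eventually_add_mul_le_mul_sq (r ^ 2) 0 (half_pos hε))
  refine ⟨n₀, fun n hn => ?_⟩
  obtain ⟨hex, hsmall⟩ := hn₀ n hn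
  have hturan := sub_sq_le_card_edgeFinset_turanGraph n hr
  have hlow : (#(turanGraph n r).edgeFinset : ℝ) ≤ extremalNumber n H := by
    exact_mod_cast Fintype.card_fin n ▸
      card_edgeFinset_le_extremalNumber (free_turanGraph_of_not_colorable hr hncol n)
  rw [exNum_eq_extremalNumber, ncard_edgeSet, abs_of_nonneg (sub_nonneg.2 hlow)]
  linarith
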